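/- arXiv:2306.08597 — 2 statements merged into one kernel-verified Lean document; each statement's English description precedes it below -/
import Mathlib

section
/- Fix n ≥ 1. Every function f : 2^{[n]} → ℤ with f(∅) = 0 can be written uniquely as a ℤ-linear combination of the rank functions r_{SM_n(I)}, as I ranges over the nonempty subsets of [n]; that is, these rank functions form a ℤ-basis of the abelian group of functions f : 2^{[n]} → ℤ with f(∅) = 0. -/
open MvPolynomial

noncomputable section

/-- The defining recursion for the family of Grothendieck polynomials of permutations of `Fin n`
(written with 0-based positions): `G w₀ = x₀^{n-1} x₁^{n-2} ⋯`, and whenever `w j < w (j+1)`,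
`(x_j - x_{j+1}) * G w = f - s_j · f` where `f = (1 - x_{j+1}) * G (w s_j)`. -/
def IsGrothendieck (n : ℕ) (G : Equiv.Perm (Fin n) → MvPolynomial (Fin n) ℤ) : Prop :=
  G Fin.revPerm = ∏ i : Fin n, X i ^ (n - 1 - (i : ℕ)) ∧
    ∀ (w : Equiv.Perm (Fin n)) (j j' : Fin n), (j : ℕ) + 1 = (j' : ℕ) → w j < w j' →
      (X j - X j') * G w =
        (1 - X j') * G (w * Equiv.swap j j') -
          rename (⇑(Equiv.swap j j')) ((1 - X j') * G (w * Equiv.swap j j'))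

/-- `w` is vexillary: it avoids the pattern 2143. -/
def Vexillary {n : ℕ} (w : Equiv.Perm (Fin n)) : Prop :=
  ¬∃ i j k l : Fin n, i < j ∧ j < k ∧ k < l ∧ w j < w i ∧ w i < w l ∧ w l < w k

/-- The Rothe diagram of `w`, as a set of (row, column) pairs with 1-based indexing:
`D(w) = {(i,j) : i < w⁻¹(j), j < w(i)}`. -/
def RotheDiagram (n : ℕ) (w : Equiv.Perm (Fin n)) : Finset (ℕ × ℕ) :=
  Finset.image (fun p : Fin n × Fin n => ((p.1 : ℕ) + 1, (p.2 : ℕ) + 1))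
    (Finset.univ.filter fun p : Fin n × Fin n => p.1 < w.symm p.2 ∧ p.2 < w p.1)

/-- The rank function of the Rothe diagram: `r(i,j) = #{k < i : w(k) < j}` (1-based). -/
def RotheRank (n : ℕ) (w : Equiv.Perm (Fin n)) (s : ℕ × ℕ) : ℤ :=
  ((Finset.univ.filter fun k : Fin n => (k : ℕ) + 1 < s.1 ∧ (w k : ℕ) + 1 < s.2).card : ℤ)

/-- Two squares are linked with respect to the Rothe rank function:
`i - i' = r(i,j) - r(i',j')`. -/
def RLinked (n : ℕ) (w : Equiv.Perm (Fin n)) (s t : ℕ × ℕ) : Prop :=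
  (s.1 : ℤ) - (t.1 : ℤ) = RotheRank n w s - RotheRank n w t

/-- A bubbling diagram: a diagram `D` of squares (row ≥ 1, 1-based), a nonnegative rank
function `r` and a set `F ⊆ D` of dead squares, such that every dead square has a live square
strictly above it in its column with the prescribed rank difference to the closest such, and
dead squares in the same row have distinct ranks. -/
structure BubblingDiagram where
  D : Finset (ℕ × ℕ)
  r : ℕ × ℕ → ℤ
  F : Finset (ℕ × ℕ)
  F_subset : F ⊆ D
  r_nonneg : ∀ s ∈ D, 0 ≤ r s
  dead_live_above : ∀ s ∈ F, ∃ i' < s.1, (i', s.2) ∈ D ∧ (i', s.2) ∉ F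
  dead_rank : ∀ s ∈ F, ∀ i' < s.1, (i', s.2) ∈ D → (i', s.2) ∉ F →
    (∀ i'', i' < i'' → i'' < s.1 → (i'', s.2) ∈ D → (i'', s.2) ∈ F) →
    r s - r (i', s.2) = (s.1 : ℤ) - (i' : ℤ)
  dead_distinct : ∀ s ∈ F, ∀ t ∈ F, s.1 = t.1 → s.2 ≠ t.2 → r s ≠ r t

/-- A bubbling move: a live square `(i,j)` with `(i-1,j)` empty moves up one row,
its rank decreasing by one. -/
def IsBubbleMove (B C : BubblingDiagram) : Prop :=
  ∃ i j : ℕ, 2 ≤ i ∧ (i, j) ∈ B.D ∧ (i, j) ∉ B.F ∧ (i - 1, j) ∉ B.D ∧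
    C.D = insert (i - 1, j) (B.D.erase (i, j)) ∧ C.F = B.F ∧
    C.r = Function.update B.r (i - 1, j) (B.r (i, j) - 1)

/-- A K-bubbling move: a live square `(i,j)` with `(i-1,j)` empty, and such that no dead square
in row `i` has the same rank as `(i,j)`, moves up one row (rank decreasing by one), leaving
behind a dead copy of itself. -/
def IsKBubbleMove (B C : BubblingDiagram) : Prop :=
  ∃ i j : ℕ, 2 ≤ i ∧ (i, j) ∈ B.D ∧ (i, j) ∉ B.F ∧ (i - 1, j) ∉ B.D ∧
    (∀ k : ℕ, (i, k) ∈ B.F → B.r (i, k) ≠ B.r (i, j)) ∧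
    C.D = insert (i - 1, j) B.D ∧ C.F = insert (i, j) B.F ∧
    C.r = Function.update B.r (i - 1, j) (B.r (i, j) - 1)

/-- `C ∈ BD(B)`: `C` is obtainable from `B` by finitely many bubbling and K-bubbling moves. -/
def InBD (B C : BubblingDiagram) : Prop :=
  Relation.ReflTransGen (fun P Q => IsBubbleMove P Q ∨ IsKBubbleMove P Q) B C

/-- The Rothe bubbling diagram `𝒟(w) = (D(w), r_{D(w)}, ∅)`. -/
def RotheBD (n : ℕ) (w : Equiv.Perm (Fin n)) : BubblingDiagram where
  D := RotheDiagram n w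
  r := RotheRank n w
  F := ∅
  F_subset := Finset.empty_subset _
  r_nonneg := fun _ _ => Int.natCast_nonneg _
  dead_live_above := by simp
  dead_rank := by simp
  dead_distinct := by simp

/-- The weight of a diagram: its `i`-th coordinate is the number of squares in row `i+1`
(1-based row `i+1` corresponds to `i : Fin n`). -/
def diagWt (n : ℕ) (D : Finset (ℕ × ℕ)) (i : Fin n) : ℕ :=
  (D.filter fun s => s.1 = (i : ℕ) + 1).card

/-- Gale order on finite sets of naturals: same cardinality, and the `m`-th smallest element
of `R` is at most the `m`-th smallest element of `S`, for every `m`. -/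
def galeLE (R S : Finset ℕ) : Prop :=
  R.card = S.card ∧ ∀ m < R.card, (R.sort (· ≤ ·)).getD m 0 ≤ (S.sort (· ≤ ·)).getD m 0

/-- Column `j` of a diagram: the set of rows of its squares in column `j`. -/
def diagCol (D : Finset (ℕ × ℕ)) (j : ℕ) : Finset ℕ :=
  (D.filter fun s => s.2 = j).image Prod.fst

/-- Columnwise Gale order on diagrams. -/
def diagLE (C D : Finset (ℕ × ℕ)) : Prop := ∀ j : ℕ, galeLE (diagCol C j) (diagCol D j)

/-- The diagram lies in the grid `[n] × [n]` (1-based). -/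
def InGrid (n : ℕ) (D : Finset (ℕ × ℕ)) : Prop :=
  ∀ s ∈ D, s.1 ∈ Finset.Icc 1 n ∧ s.2 ∈ Finset.Icc 1 n

/-- M-convexity of a set of lattice points. -/
def MConvex {m : ℕ} (S : Set (Fin m → ℤ)) : Prop :=
  ∀ x ∈ S, ∀ y ∈ S, ∀ i : Fin m, y i < x i →
    ∃ j : Fin m, x j < y j ∧ (x - Pi.single i 1 + Pi.single j 1) ∈ S ∧
      (y - Pi.single j 1 + Pi.single i 1) ∈ S

open Classical in
/-- The rank function of the Schubert matroid `SM_n(I)`: the bases are the `B ⊆ [n]` with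
`B ≤ I` in Gale order, and `rank J = max {#(J ∩ B) : B a basis}`. -/
def schubertRank (n : ℕ) (I J : Finset ℕ) : ℕ :=
  ((Finset.Icc 1 n).powerset.filter fun B => galeLE B I).sup fun B => (J ∩ B).card

/-- The Schubert matroid polytope `P(SM_n(I)) ⊆ ℝⁿ`: the convex hull of the 0/1 indicator
vectors of the bases of `SM_n(I)` (coordinate `i : Fin n` stands for the element `i+1`). -/
def schubertPolytope (n : ℕ) (I : Finset ℕ) : Set (Fin n → ℝ) :=
  convexHull ℝ {v | ∃ B : Finset ℕ, B ⊆ Finset.Icc 1 n ∧ galeLE B I ∧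
    v = fun i : Fin n => if (i : ℕ) + 1 ∈ B then (1 : ℝ) else 0}

/-- A Schubitope: a finite Minkowski sum of Schubert matroid polytopes of nonempty
subsets of `[n]`. -/
def IsSchubitope (n : ℕ) (P : Set (Fin n → ℝ)) : Prop :=
  ∃ (k : ℕ) (I : Fin k → Finset ℕ), (∀ j, (I j).Nonempty ∧ I j ⊆ Finset.Icc 1 n) ∧
    P = {x | ∃ p : Fin k → Fin n → ℝ, (∀ j, p j ∈ schubertPolytope n (I j)) ∧ x = ∑ j, p j}

/-- A generalized permutahedron: the polytope cut out by a submodular function `z`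
with `z(∅) = 0`. -/
def IsGenPermutahedron {m : ℕ} (P : Set (Fin m → ℝ)) : Prop :=
  ∃ z : Finset (Fin m) → ℝ, z ∅ = 0 ∧
    (∀ A B : Finset (Fin m), z (A ∪ B) + z (A ∩ B) ≤ z A + z B) ∧
    P = {t | (∀ A : Finset (Fin m), ∑ i ∈ A, t i ≤ z A) ∧ ∑ i, t i = z Finset.univ}

/-- The padding sets `S^{(k,s)}`: `S^{(0,s)} = S` and `S^{(k,s)}` is obtained from
`S^{(k-1,s)}` by inserting the largest `i ∈ [1, s)` not already present (when one exists). -/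
def pad (S : Finset ℕ) (s : ℕ) : ℕ → Finset ℕ
  | 0 => S
  | k + 1 =>
      if h : ((Finset.Ico 1 s).filter fun i => i ∉ pad S s k).Nonempty then
        insert (((Finset.Ico 1 s).filter fun i => i ∉ pad S s k).max' h) (pad S s k)
      else pad S s k

/-- `d = s - #{i ∈ S : i ≤ s}`. -/
def padDepth (S : Finset ℕ) (s : ℕ) : ℕ := s - (S.filter fun i => i ≤ s).card

/-- The order `I ≺ J`: `max (I \ J) ≤ max (J \ I)` (with the convention `max ∅ = 0`). -/
def maxPrec (I J : Finset ℕ) : Prop := (I \ J).sup id ≤ (J \ I).sup id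

/-- Rows of the live squares of column `j` of a bubbling diagram. -/
def liveCol (B : BubblingDiagram) (j : ℕ) : Finset ℕ :=
  ((B.D \ B.F).filter fun s => s.2 = j).image Prod.fst

/-- The row of the `a`-th highest live square of column `j` (`a` is 1-based; highest means
smallest row index). -/
def nthLiveRow (B : BubblingDiagram) (j a : ℕ) : ℕ :=
  ((liveCol B j).sort (· ≤ ·)).getD (a - 1) 0

/-- The number of squares of `D` strictly below `s` in its column. -/
def belowCount (D : Finset (ℕ × ℕ)) (s : ℕ × ℕ) : ℕ :=
  (D.filter fun t => t.2 = s.2 ∧ s.1 < t.1).card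

/-- The total order `≺` on the squares of a diagram: lower rows first; within a row, fewer
squares below first; ties broken by smaller column index. -/
def sqPrec (D : Finset (ℕ × ℕ)) (s t : ℕ × ℕ) : Prop :=
  t.1 < s.1 ∨ (s.1 = t.1 ∧ belowCount D s < belowCount D t) ∨
    (s.1 = t.1 ∧ belowCount D s = belowCount D t ∧ s.2 < t.2)

end

/-!
The proof rests on the formula
`r_{SM_n(I)}(K) = min_{0 ≤ x ≤ n} (#{s ∈ I | x < s} + #{s ∈ K | s ≤ x})`.
For nonempty `J ⊆ [n]`, let `Q = shiftTargets n J` be the set of `p ∈ [0, n]` with `p ∉ J` and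
either `p + 1 ∈ J` or `p = n`, and for `T ⊆ Q` let `J_T = shiftDown J T` be `J` with every `t + 1`,
`t ∈ T`, moved down to `t`. Up to the constant `[n ∈ T]`, passing from `J` to `J_T` lowers the
minimised function by one exactly on `T`, so by inclusion–exclusion
`∑_{T ⊆ Q} (-1)^{|T|} r_{SM_n(J_T)}(K)` is `1` or `0` according as that function attains its
minimum at every point of `Q`, which happens exactly when `K = J`. Thus every indicator function of
a nonempty set is an integral combination of rank functions, and the square matrix
`(r_{SM_n(I)}(K))_{I, K}` is invertible over `ℤ`.
-/

open Finset

lemma lt_orderEmbOfFin_iff {α : Type*} [LinearOrder α] (s : Finset α) (i : Fin #s) (x : α) :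
    x < s.orderEmbOfFin rfl i ↔ #s - i ≤ #{b ∈ s | x < b} := by
  set e := s.orderEmbOfFin rfl
  have hcard : #{b ∈ s | x < b} = #(univ.filter fun j => x < e j) := by
    conv_lhs => rw [← s.map_orderEmbOfFin_univ rfl, filter_map, card_map]
    rfl
  rw [hcard]
  constructor
  · intro hx
    calc #s - i = #(Ici i) := (Fin.card_Ici i).symm
      _ ≤ _ := card_le_card fun j hj => by
          simpa using hx.trans_le (e.monotone (mem_Ici.mp hj))
  · intro h
    by_contra hx
    have hsub : (univ.filter fun j => x < e j) ⊆ Ioi i := fun j hj => by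
      simp only [mem_filter, mem_univ, true_and] at hj
      exact mem_Ioi.mpr (e.lt_iff_lt.mp ((not_lt.mp hx).trans_lt hj))
    have := (card_le_card hsub).trans' h
    rw [Fin.card_Ioi] at this
    omega

lemma galeLE_iff_card_filter_lt_le {B X : Finset ℕ} :
    galeLE B X ↔ #B = #X ∧ ∀ x, #{b ∈ B | x < b} ≤ #{s ∈ X | x < s} := by
  refine and_congr_right fun hBX => ?_
  have nth (S : Finset ℕ) (m : ℕ) (hm : m < #S) :
      (S.sort (· ≤ ·)).getD m 0 = S.orderEmbOfFin rfl ⟨m, hm⟩ := by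
    rw [List.getD_eq_getElem _ _ (by simpa using hm), orderEmbOfFin_apply]
    rfl
  constructor
  · intro h x
    by_contra! hlt
    have hle : #{b ∈ B | x < b} ≤ #B := card_filter_le _ _
    set i : Fin #B := ⟨#B - (#{s ∈ X | x < s} + 1), by omega⟩
    have hB : x < B.orderEmbOfFin rfl i :=
      (lt_orderEmbOfFin_iff B i x).mpr (by simp only [i]; omega)
    have hX : x < X.orderEmbOfFin rfl (i.cast hBX) := by
      have := h i i.2
      rw [nth B i i.2, nth X i (hBX ▸ i.2)] at this
      exact hB.trans_le this
    have := (lt_orderEmbOfFin_iff X _ x).mp hX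
    simp only [Fin.val_cast, i] at this
    omega
  · intro h m hm
    rw [nth B m hm, nth X m (hBX ▸ hm)]
    by_contra! hlt
    have hB := (lt_orderEmbOfFin_iff B ⟨m, hm⟩ _).mp hlt
    have hX := (lt_orderEmbOfFin_iff X ⟨m, hBX ▸ hm⟩ _).not.mp (lt_irrefl _)
    have := h (X.orderEmbOfFin rfl ⟨m, hBX ▸ hm⟩)
    omega

lemma galeLE_refl (X : Finset ℕ) : galeLE X X := ⟨rfl, fun _ _ => le_rfl⟩

lemma card_filter_insert_of_notMem {α : Type*} [DecidableEq α] {s : Finset α} {a : α}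
    (ha : a ∉ s) (p : α → Prop) [DecidablePred p] :
    #{b ∈ insert a s | p b} = #{b ∈ s | p b} + if p a then 1 else 0 := by
  rw [filter_insert]
  split_ifs
  · exact card_insert_of_notMem fun h => ha (mem_filter.mp h).1
  · rfl

lemma card_filter_lt_eq_add (A : Finset ℕ) (x : ℕ) :
    #{s ∈ A | x < s} = #{s ∈ A | x + 1 < s} + if x + 1 ∈ A then 1 else 0 := by
  have : {s ∈ A | x < s} = {s ∈ A | x + 1 < s} ∪ {s ∈ A | s = x + 1} := by
    ext s
    simp only [mem_filter, mem_union, ← and_or_left]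
    exact and_congr_right fun _ => by omega
  rw [this, card_union_of_disjoint (disjoint_filter.mpr fun _ _ _ _ => by omega), filter_eq']
  split_ifs <;> simp

lemma card_filter_le_add_one (A : Finset ℕ) (x : ℕ) :
    #{s ∈ A | s ≤ x + 1} = #{s ∈ A | s ≤ x} + if x + 1 ∈ A then 1 else 0 := by
  have : {s ∈ A | s ≤ x + 1} = {s ∈ A | s ≤ x} ∪ {s ∈ A | s = x + 1} := by
    ext s
    simp only [mem_filter, mem_union, ← and_or_left]
    exact and_congr_right fun _ => by omega
  rw [this, card_union_of_disjoint (disjoint_filter.mpr fun _ _ _ _ => by omega), filter_eq']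
  split_ifs <;> simp

lemma subset_Icc_of_notMem_add_one {n : ℕ} {A : Finset ℕ} (hA : A ⊆ Icc 1 (n + 1))
    (hnA : n + 1 ∉ A) : A ⊆ Icc 1 n := fun s hs => by
  have := mem_Icc.mp (hA hs)
  have : s ≠ n + 1 := fun h => hnA (h ▸ hs)
  exact mem_Icc.mpr (by omega)

def cutCount (I K : Finset ℕ) (x : ℕ) : ℕ := #{s ∈ I | x < s} + #{s ∈ K | s ≤ x}

lemma cutCount_insert_left {I : Finset ℕ} {a : ℕ} (ha : a ∉ I) (K : Finset ℕ) (x : ℕ) :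
    cutCount (insert a I) K x = cutCount I K x + if x < a then 1 else 0 := by
  simp only [cutCount, card_filter_insert_of_notMem ha]
  omega

lemma cutCount_insert_right (I : Finset ℕ) {K : Finset ℕ} {a : ℕ} (ha : a ∉ K) (x : ℕ) :
    cutCount I (insert a K) x = cutCount I K x + if a ≤ x then 1 else 0 := by
  simp only [cutCount, card_filter_insert_of_notMem ha]
  omega

lemma cutCount_add_one (J K : Finset ℕ) (x : ℕ) :
    cutCount J K (x + 1) + (if x + 1 ∈ J then 1 else 0) =
      cutCount J K x + if x + 1 ∈ K then 1 else 0 := by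
  rw [cutCount, cutCount, card_filter_lt_eq_add J x, card_filter_le_add_one K x]
  ring

lemma cutCount_self (J : Finset ℕ) (x : ℕ) : cutCount J J x = #J := by
  rw [cutCount, add_comm, ← card_filter_add_card_filter_not (s := J) (· ≤ x)]
  simp only [not_le]

lemma schubertRank_empty_left (n : ℕ) (K : Finset ℕ) : schubertRank n ∅ K = 0 := by
  simp +contextual [schubertRank, galeLE]

lemma schubertRank_empty_right (n : ℕ) (I : Finset ℕ) : schubertRank n I ∅ = 0 := by
  simp [schubertRank]

lemma card_inter_le_schubertRank {n : ℕ} {X B : Finset ℕ} (hB : B ⊆ Icc 1 n)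
    (hBX : galeLE B X) (K : Finset ℕ) : #(K ∩ B) ≤ schubertRank n X K := by
  classical
  unfold schubertRank
  exact le_sup (f := fun B => #(K ∩ B)) (mem_filter.mpr ⟨mem_powerset.mpr hB, hBX⟩)

lemma exists_card_inter_eq_schubertRank {n : ℕ} {X : Finset ℕ} (hX : X ⊆ Icc 1 n)
    (K : Finset ℕ) : ∃ B ⊆ Icc 1 n, galeLE B X ∧ #(K ∩ B) = schubertRank n X K := by
  classical
  unfold schubertRank
  obtain ⟨B, hB, hmax⟩ := exists_mem_eq_sup {B ∈ (Icc 1 n).powerset | galeLE B X}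
    ⟨X, mem_filter.mpr ⟨mem_powerset.mpr hX, galeLE_refl X⟩⟩ fun B => #(K ∩ B)
  rw [mem_filter, mem_powerset] at hB
  exact ⟨B, hB.1, hB.2, hmax.symm⟩

lemma schubertRank_mono {n n' : ℕ} (hn : n ≤ n') (I : Finset ℕ) {K K' : Finset ℕ}
    (hK : K ⊆ K') : schubertRank n I K ≤ schubertRank n' I K' := by
  classical
  conv_lhs => unfold schubertRank
  refine Finset.sup_le fun B hB => ?_
  rw [mem_filter, mem_powerset] at hB
  exact (card_le_card (inter_subset_inter_right hK)).trans
    (card_inter_le_schubertRank (hB.1.trans (Icc_subset_Icc_right hn)) hB.2 K')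

lemma schubertRank_le_cutCount (n : ℕ) (I K : Finset ℕ) (x : ℕ) :
    schubertRank n I K ≤ cutCount I K x := by
  classical
  unfold schubertRank
  refine Finset.sup_le fun B hB => ?_
  have hgale := (galeLE_iff_card_filter_lt_le.mp (mem_filter.mp hB).2).2 x
  calc #(K ∩ B) = #{s ∈ K ∩ B | s ≤ x} + #{s ∈ K ∩ B | ¬s ≤ x} :=
        (card_filter_add_card_filter_not _).symm
    _ ≤ #{s ∈ K | s ≤ x} + #{b ∈ B | x < b} := by
        gcongr
        · exact inter_subset_left
        · intro s hs
          simp only [mem_filter, mem_inter, not_le] at hs ⊢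
          exact ⟨hs.1.2, hs.2⟩
    _ ≤ cutCount I K x := by rw [cutCount]; omega

lemma schubertRank_add_one_le_insert {n c : ℕ} {I K : Finset ℕ} (hI : I ⊆ Icc 1 n)
    (hc : c ∈ Icc 1 (n + 1)) (hKc : ∀ k ∈ K, k < c) :
    schubertRank n I K + 1 ≤ schubertRank (n + 1) (insert (n + 1) I) (insert c K) := by
  obtain ⟨B, hB, hBI, hmax⟩ := exists_card_inter_eq_schubertRank hI K
  have hnB : n + 1 ∉ B := fun h => by simpa using hB h
  have hnI : n + 1 ∉ I := fun h => by simpa using hI h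
  set e := if c ∈ B then n + 1 else c
  have heB : e ∉ B := by unfold e; split_ifs <;> assumption
  have hce : c ∈ insert e B := by unfold e; split_ifs with h <;> simp [h]
  have he : e ∈ Icc 1 (n + 1) := by simp only [mem_Icc] at hc ⊢; unfold e; split_ifs <;> omega
  have hgale : galeLE (insert e B) (insert (n + 1) I) := by
    rw [galeLE_iff_card_filter_lt_le] at hBI ⊢
    refine ⟨by rw [card_insert_of_notMem heB, card_insert_of_notMem hnI, hBI.1], fun x => ?_⟩
    rw [card_filter_insert_of_notMem heB, card_filter_insert_of_notMem hnI]
    have := hBI.2 x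
    have := (mem_Icc.mp he).2
    split_ifs <;> omega
  have hsub : insert c (K ∩ B) ⊆ insert c K ∩ insert e B :=
    insert_subset (mem_inter.mpr ⟨mem_insert_self c K, hce⟩)
      (inter_subset_inter (subset_insert c K) (subset_insert e B))
  have hcKB : c ∉ K ∩ B := fun h => (hKc c (mem_inter.mp h).1).false
  calc schubertRank n I K + 1 = #(insert c (K ∩ B)) := by rw [card_insert_of_notMem hcKB, hmax]
    _ ≤ #(insert c K ∩ insert e B) := card_le_card hsub
    _ ≤ _ := card_inter_le_schubertRank
          (insert_subset he (hB.trans (Icc_subset_Icc_right n.le_succ))) hgale _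

lemma exists_cutCount_le_schubertRank_insert {n c x : ℕ} {I K : Finset ℕ} (hI : I ⊆ Icc 1 n)
    (hc : c ∈ Icc 1 (n + 1)) (hKc : ∀ k ∈ K, k < c) (hxn : x ≤ n)
    (hx : cutCount I K x ≤ schubertRank n I K) :
    ∃ y ≤ n + 1, cutCount (insert (n + 1) I) (insert c K) y ≤
      schubertRank (n + 1) (insert (n + 1) I) (insert c K) := by
  have hnI : n + 1 ∉ I := fun h => by simpa using hI h
  have hcK : c ∉ K := fun h => (hKc c h).false
  have hstep := schubertRank_add_one_le_insert hI hc hKc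
  by_cases hxc : x < c
  · refine ⟨x, by omega, ?_⟩
    rw [cutCount_insert_left hnI, cutCount_insert_right _ hcK,
      if_pos (show x < n + 1 by omega), if_neg (show ¬c ≤ x by omega)]
    omega
  · refine ⟨n + 1, le_rfl, ?_⟩
    have hI₁ : insert (n + 1) I ⊆ Icc 1 (n + 1) :=
      insert_subset (by simp) (hI.trans (Icc_subset_Icc_right n.le_succ))
    have hK₁ : ∀ k ∈ insert c K, k ≤ n + 1 := fun k hk => by
      rcases mem_insert.mp hk with rfl | hk
      exacts [(mem_Icc.mp hc).2, ((hKc k hk).trans_le (mem_Icc.mp hc).2).le]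
    have htop : cutCount (insert (n + 1) I) (insert c K) (n + 1) = #K + 1 := by
      rw [cutCount, filter_false_of_mem fun s hs => not_lt.mpr (mem_Icc.mp (hI₁ hs)).2,
        filter_true_of_mem hK₁, card_empty, card_insert_of_notMem hcK, zero_add]
    have hx' : cutCount I K x = #{s ∈ I | x < s} + #K := by
      rw [cutCount, filter_true_of_mem (s := K) fun k hk => by have := hKc k hk; omega]
    omega

lemma exists_cutCount_le_schubertRank (n : ℕ) {I K : Finset ℕ} (hI : I ⊆ Icc 1 n)
    (hK : K ⊆ Icc 1 n) : ∃ x ≤ n, cutCount I K x ≤ schubertRank n I K := by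
  induction n generalizing I K with
  | zero =>
    refine ⟨0, le_rfl, ?_⟩
    simp [subset_empty.mp (by simpa using hI), subset_empty.mp (by simpa using hK), cutCount]
  | succ n ih =>
    by_cases hnI : n + 1 ∈ I
    · obtain ⟨I', hnI', rfl⟩ : ∃ I', n + 1 ∉ I' ∧ I = insert (n + 1) I' :=
        ⟨I.erase (n + 1), notMem_erase _ _, (insert_erase hnI).symm⟩
      have hI' := subset_Icc_of_notMem_add_one ((subset_insert _ _).trans hI) hnI'
      rcases K.eq_empty_or_nonempty with rfl | hKne
      · refine ⟨n + 1, le_rfl, ?_⟩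
        simp [cutCount, filter_false_of_mem fun s hs => not_lt.mpr (mem_Icc.mp (hI hs)).2]
      · obtain ⟨K', c, hKc, rfl⟩ : ∃ K' c, (∀ k ∈ K', k < c) ∧ K = insert c K' :=
          ⟨K.erase (K.max' hKne), K.max' hKne,
            fun k hk => lt_of_le_of_ne (le_max' _ k (mem_of_mem_erase hk)) (ne_of_mem_erase hk),
            (insert_erase (K.max'_mem hKne)).symm⟩
        have hc := hK (mem_insert_self c K')
        obtain ⟨x, hxn, hx⟩ := ih hI' fun k hk => by
          have := hKc k hk; have := hK (mem_insert_of_mem hk); simp only [mem_Icc] at *; omega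
        exact exists_cutCount_le_schubertRank_insert hI' hc hKc hxn hx
    · obtain ⟨x, hxn, hx⟩ := ih (subset_Icc_of_notMem_add_one hI hnI)
        (subset_Icc_of_notMem_add_one ((erase_subset _ _).trans hK) (notMem_erase _ _))
      refine ⟨x, by omega, ?_⟩
      calc cutCount I K x ≤ cutCount I (insert (n + 1) (K.erase (n + 1))) x := by
            unfold cutCount; gcongr; exact insert_erase_subset _ _
        _ = cutCount I (K.erase (n + 1)) x := by
            rw [cutCount_insert_right _ (notMem_erase _ _), if_neg (by omega), add_zero]
        _ ≤ schubertRank n I (K.erase (n + 1)) := hx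
        _ ≤ schubertRank (n + 1) I K := schubertRank_mono n.le_succ I (erase_subset _ _)

theorem schubertRank_eq_inf' {n : ℕ} {I K : Finset ℕ} (hI : I ⊆ Icc 1 n) (hK : K ⊆ Icc 1 n) :
    (schubertRank n I K : ℤ) =
      (range (n + 1)).inf' nonempty_range_add_one fun x => (cutCount I K x : ℤ) := by
  obtain ⟨x, hxn, hx⟩ := exists_cutCount_le_schubertRank n hI hK
  exact le_antisymm (le_inf' _ _ fun y _ => Nat.cast_le.mpr (schubertRank_le_cutCount n I K y))
    ((inf'_le _ (mem_range.mpr (Nat.lt_succ_of_le hxn))).trans (Nat.cast_le.mpr hx))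

lemma inf'_sub_indicator {ι : Type*} [DecidableEq ι] {D T : Finset ι} (hD : D.Nonempty)
    (hT : T ⊆ D) (φ : ι → ℤ) :
    D.inf' hD (fun x => φ x - if x ∈ T then 1 else 0) =
      D.inf' hD φ - if ∃ x ∈ T, φ x = D.inf' hD φ then 1 else 0 := by
  have hmin : ∀ x ∈ D, D.inf' hD φ ≤ φ x := fun x hx => inf'_le _ hx
  apply le_antisymm
  · split_ifs with h
    · obtain ⟨x, hxT, hx⟩ := h
      exact (inf'_le _ (hT hxT)).trans (by simp [hxT, hx])
    · obtain ⟨x, hxD, hx⟩ := exists_mem_eq_inf' hD φ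
      have hxT : x ∉ T := fun hxT => h ⟨x, hxT, hx.symm⟩
      exact (inf'_le _ hxD).trans (by simp [hxT, hx])
  · refine le_inf' _ _ fun x hxD => ?_
    have := hmin x hxD
    split_ifs with h₁ h₂ h₂ <;> try omega
    by_contra hlt
    exact h₁ ⟨x, h₂, by omega⟩

lemma sum_powerset_neg_one_pow_card_mul_ite_exists {α : Type*} [DecidableEq α] {P : Finset α}
    (hP : P.Nonempty) (p : α → Prop) [DecidablePred p] :
    ∑ T ∈ P.powerset, (-1 : ℤ) ^ #T * (if ∃ x ∈ T, p x then 1 else 0) =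
      -(if ∀ x ∈ P, p x then 1 else 0) := by
  have hcompl (T : Finset α) : (if ∃ x ∈ T, p x then 1 else 0 : ℤ) =
      1 - if ¬∃ x ∈ T, p x then 1 else 0 := by
    by_cases h : ∃ x ∈ T, p x <;> simp [h]
  have hfilter : {T ∈ P.powerset | ¬∃ x ∈ T, p x} = {x ∈ P | ¬p x}.powerset := by
    ext T
    simp only [mem_filter, mem_powerset, subset_iff, not_exists, not_and]
    exact ⟨fun h x hx => ⟨h.1 hx, h.2 x hx⟩, fun h => ⟨fun x hx => (h hx).1, fun x hx => (h hx).2⟩⟩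
  simp_rw [hcompl, mul_sub, mul_one, sum_sub_distrib, sum_powerset_neg_one_pow_card_of_nonempty hP,
    mul_ite, mul_one, mul_zero, ← sum_filter, hfilter, sum_powerset_neg_one_pow_card,
    filter_eq_empty_iff, not_not]
  simp

def shiftTargets (n : ℕ) (J : Finset ℕ) : Finset ℕ :=
  {p ∈ range (n + 1) | p ∉ J ∧ (p + 1 ∈ J ∨ p = n)}

/-- For `T ⊆ shiftTargets n J`, every `t + 1 ∈ J` with `t ∈ T` is moved down to `t`; the target
`0` means that `1` is deleted, and the target `n ∉ J` means that `n` is added. -/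
def shiftDown (J T : Finset ℕ) : Finset ℕ := (J \ T.image (· + 1)) ∪ T.erase 0

section Shift

variable {n : ℕ} {J T K : Finset ℕ}

lemma mem_shiftTargets {p : ℕ} :
    p ∈ shiftTargets n J ↔ p ≤ n ∧ p ∉ J ∧ (p + 1 ∈ J ∨ p = n) := by
  simp [shiftTargets]

lemma shiftDown_subset_Icc (hJ : J ⊆ Icc 1 n) (hT : T ⊆ shiftTargets n J) :
    shiftDown J T ⊆ Icc 1 n := by
  intro a ha
  rcases mem_union.mp ha with ha | ha
  · exact hJ (mem_sdiff.mp ha).1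
  · have := (mem_shiftTargets.mp (hT (mem_of_mem_erase ha))).1
    have := ne_of_mem_erase ha
    exact mem_Icc.mpr (by omega)

lemma add_one_mem_shiftDown_iff (x : ℕ) :
    x + 1 ∈ shiftDown J T ↔ (x + 1 ∈ J ∧ x ∉ T) ∨ x + 1 ∈ T := by
  simp [shiftDown]

lemma card_filter_lt_shiftDown (hJ : J ⊆ Icc 1 n) (hT : T ⊆ shiftTargets n J) {x : ℕ}
    (hx : x ≤ n) :
    #{s ∈ shiftDown J T | x < s} + (if x ∈ T then 1 else 0) =
      #{s ∈ J | x < s} + if n ∈ T then 1 else 0 := by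
  induction hd : n - x generalizing x with
  | zero =>
    obtain rfl : x = n := by omega
    rw [filter_false_of_mem fun s hs => not_lt.mpr (mem_Icc.mp (shiftDown_subset_Icc hJ hT hs)).2,
      filter_false_of_mem fun s hs => not_lt.mpr (mem_Icc.mp (hJ hs)).2]
  | succ d ih =>
    have := ih (x := x + 1) (by omega) (by omega)
    have hxT : x ∈ T → x + 1 ∈ J := fun h =>
      (mem_shiftTargets.mp (hT h)).2.2.resolve_right (by omega)
    have hTJ : x + 1 ∈ T → x + 1 ∉ J := fun h => (mem_shiftTargets.mp (hT h)).2.1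
    have hstep : (if x + 1 ∈ shiftDown J T then 1 else 0) + (if x ∈ T then 1 else 0) =
        (if x + 1 ∈ J then 1 else 0) + if x + 1 ∈ T then 1 else 0 := by
      rw [if_congr (add_one_mem_shiftDown_iff x) rfl rfl]
      by_cases h₁ : x ∈ T
      · have h₂ : x + 1 ∉ T := fun h => hTJ h (hxT h₁)
        simp [h₁, h₂, hxT h₁]
      · by_cases h₂ : x + 1 ∈ T <;> simp [h₁, h₂, hTJ]
    rw [card_filter_lt_eq_add (shiftDown J T), card_filter_lt_eq_add J]
    omega

lemma cutCount_shiftDown (hJ : J ⊆ Icc 1 n) (hT : T ⊆ shiftTargets n J) (K : Finset ℕ)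
    {x : ℕ} (hx : x ≤ n) :
    (cutCount (shiftDown J T) K x : ℤ) =
      cutCount J K x - (if x ∈ T then 1 else 0) + if n ∈ T then 1 else 0 := by
  have := card_filter_lt_shiftDown hJ hT hx
  simp only [cutCount]
  split_ifs at this ⊢ <;> omega

lemma schubertRank_shiftDown (hJ : J ⊆ Icc 1 n) (hT : T ⊆ shiftTargets n J)
    (hK : K ⊆ Icc 1 n) :
    (schubertRank n (shiftDown J T) K : ℤ) =
      (range (n + 1)).inf' nonempty_range_add_one (fun x => (cutCount J K x : ℤ))
        - (if ∃ x ∈ T, (cutCount J K x : ℤ) =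
            (range (n + 1)).inf' nonempty_range_add_one (fun x => (cutCount J K x : ℤ))
          then 1 else 0)
        + if n ∈ T then 1 else 0 := by
  have hTD : T ⊆ range (n + 1) := fun t ht =>
    mem_range.mpr (Nat.lt_succ_of_le (mem_shiftTargets.mp (hT ht)).1)
  rw [schubertRank_eq_inf' (shiftDown_subset_Icc hJ hT) hK,
    inf'_congr _ rfl fun x hx => cutCount_shiftDown hJ hT K (Nat.le_of_lt_succ (mem_range.mp hx)),
    ← inf'_sub_indicator _ hTD]
  exact (apply_inf'_eq_inf'_comp _ (· + _) fun a b => (min_add_add_right a b _).symm).symm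

/-- `cutCount J K` does not increase on a step `x → x + 1` with `x + 1 ∈ J` and does not decrease
on the other steps; so walking left from an element of `J`, or right from a non-element, reaches a
point of `shiftTargets n J` without decreasing `cutCount J K`. -/
lemma exists_shiftTargets_cutCount_le_of_mem (hJ : J ⊆ Icc 1 n) {x : ℕ} (hxJ : x ∈ J) :
    ∃ q ∈ shiftTargets n J, cutCount J K x ≤ cutCount J K q := by
  induction x with
  | zero => exact absurd (hJ hxJ) (by simp)
  | succ x ih =>
    have hstep := cutCount_add_one J K x
    rw [if_pos hxJ] at hstep
    by_cases hx : x ∈ J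
    · obtain ⟨q, hq, hle⟩ := ih hx
      exact ⟨q, hq, by split_ifs at hstep <;> omega⟩
    · have := (mem_Icc.mp (hJ hxJ)).2
      exact ⟨x, mem_shiftTargets.mpr ⟨by omega, hx, Or.inl hxJ⟩, by split_ifs at hstep <;> omega⟩

lemma exists_shiftTargets_cutCount_le_of_notMem {x : ℕ} (hx : x ≤ n) (hxJ : x ∉ J) :
    ∃ q ∈ shiftTargets n J, cutCount J K x ≤ cutCount J K q := by
  induction hd : n - x generalizing x with
  | zero => exact ⟨x, mem_shiftTargets.mpr ⟨hx, hxJ, Or.inr (by omega)⟩, le_rfl⟩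
  | succ d ih =>
    by_cases hx' : x + 1 ∈ J
    · exact ⟨x, mem_shiftTargets.mpr ⟨hx, hxJ, Or.inl hx'⟩, le_rfl⟩
    · obtain ⟨q, hq, hle⟩ := ih (x := x + 1) (by omega) hx' (by omega)
      have hstep := cutCount_add_one J K x
      rw [if_neg hx'] at hstep
      exact ⟨q, hq, by split_ifs at hstep <;> omega⟩

lemma forall_shiftTargets_cutCount_eq_inf'_iff (hJ : J ⊆ Icc 1 n) (hK : K ⊆ Icc 1 n) :
    (∀ q ∈ shiftTargets n J, (cutCount J K q : ℤ) =
        (range (n + 1)).inf' nonempty_range_add_one fun x => (cutCount J K x : ℤ)) ↔ K = J := by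
  constructor
  · intro hQ
    have hconst : ∀ x ≤ n, (cutCount J K x : ℤ) =
        (range (n + 1)).inf' nonempty_range_add_one fun x => (cutCount J K x : ℤ) := by
      intro x hx
      obtain ⟨q, hq, hle⟩ : ∃ q ∈ shiftTargets n J, cutCount J K x ≤ cutCount J K q := by
        by_cases hxJ : x ∈ J
        exacts [exists_shiftTargets_cutCount_le_of_mem hJ hxJ,
          exists_shiftTargets_cutCount_le_of_notMem hx hxJ]
      exact le_antisymm ((Nat.cast_le.mpr hle).trans (hQ q hq).le)
        (inf'_le _ (mem_range.mpr (by omega)))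
    ext t
    by_cases ht : 1 ≤ t ∧ t ≤ n
    · have hstep := cutCount_add_one J K (t - 1)
      have h₁ := hconst t ht.2
      have h₂ := hconst (t - 1) (by omega)
      rw [Nat.sub_add_cancel ht.1] at hstep
      have : (if t ∈ J then 1 else 0) = if t ∈ K then 1 else 0 := by omega
      by_cases htJ : t ∈ J <;> by_cases htK : t ∈ K <;> simp_all
    · exact iff_of_false (fun h => ht (mem_Icc.mp (hK h))) (fun h => ht (mem_Icc.mp (hJ h)))
  · rintro rfl q -
    simp [cutCount_self]

theorem sum_shiftDown_schubertRank (hJ : J ⊆ Icc 1 n) (hJne : J.Nonempty) (hK : K ⊆ Icc 1 n) :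
    ∑ T ∈ (shiftTargets n J).powerset, (-1 : ℤ) ^ #T * schubertRank n (shiftDown J T) K =
      if K = J then 1 else 0 := by
  obtain ⟨q, hq, hqn⟩ : ∃ q ∈ shiftTargets n J, q ≠ n := by
    have h₁ := mem_Icc.mp (hJ (J.min'_mem hJne))
    refine ⟨J.min' hJne - 1, mem_shiftTargets.mpr ⟨by omega, fun h => ?_, ?_⟩, by omega⟩
    · have := J.min'_le _ h; omega
    · left; rw [Nat.sub_add_cancel h₁.1]; exact J.min'_mem hJne
  set m := (range (n + 1)).inf' nonempty_range_add_one fun x => (cutCount J K x : ℤ)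
  calc ∑ T ∈ (shiftTargets n J).powerset, (-1 : ℤ) ^ #T * schubertRank n (shiftDown J T) K
      = m * ∑ T ∈ (shiftTargets n J).powerset, (-1 : ℤ) ^ #T
        - ∑ T ∈ (shiftTargets n J).powerset,
            (-1 : ℤ) ^ #T * (if ∃ x ∈ T, (cutCount J K x : ℤ) = m then 1 else 0)
        + ∑ T ∈ (shiftTargets n J).powerset,
            (-1 : ℤ) ^ #T * (if ∃ x ∈ T, x = n then 1 else 0) := by
        rw [mul_sum, ← sum_sub_distrib, ← sum_add_distrib]
        refine sum_congr rfl fun T hT => ?_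
        rw [schubertRank_shiftDown hJ (mem_powerset.mp hT) hK]
        simp only [exists_eq_right]
        ring
    _ = if K = J then 1 else 0 := by
        rw [sum_powerset_neg_one_pow_card_of_nonempty ⟨q, hq⟩,
          sum_powerset_neg_one_pow_card_mul_ite_exists ⟨q, hq⟩ (fun x => (cutCount J K x : ℤ) = m),
          sum_powerset_neg_one_pow_card_mul_ite_exists ⟨q, hq⟩ (· = n),
          if_neg (show ¬∀ x ∈ shiftTargets n J, x = n from fun h => hqn (h q hq)),
          if_congr (forall_shiftTargets_cutCount_eq_inf'_iff hJ hK) rfl rfl]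
        ring

end Shift

noncomputable def schubertMatrix (n : ℕ) :
    Matrix ((Icc 1 n).powerset.erase ∅) ((Icc 1 n).powerset.erase ∅) ℤ :=
  Matrix.of fun I K => schubertRank n I K

lemma mem_powerset_erase_empty {n : ℕ} {I : Finset ℕ} :
    I ∈ (Icc 1 n).powerset.erase ∅ ↔ I ⊆ Icc 1 n ∧ I.Nonempty := by
  rw [mem_erase, mem_powerset, nonempty_iff_ne_empty, and_comm]

lemma schubertRank_mem_range_vecMulLinear {n : ℕ} {I : Finset ℕ} (hI : I ⊆ Icc 1 n) :
    (fun K : (Icc 1 n).powerset.erase ∅ => (schubertRank n I K : ℤ)) ∈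
      LinearMap.range (schubertMatrix n).vecMulLinear := by
  rcases I.eq_empty_or_nonempty with rfl | hIne
  · simp only [schubertRank_empty_left, Nat.cast_zero]
    exact Submodule.zero_mem _
  · exact ⟨Pi.single ⟨I, mem_powerset_erase_empty.mpr ⟨hI, hIne⟩⟩ 1, by
      ext K; simp [schubertMatrix]⟩

theorem isUnit_schubertMatrix (n : ℕ) : IsUnit (schubertMatrix n) := by
  rw [← Matrix.vecMul_surjective_iff_isUnit, Matrix.vecMul_surjective_iff_exists_left_inverse]
  have hsingle (J : (Icc 1 n).powerset.erase ∅) :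
      Pi.single J 1 ∈ LinearMap.range (schubertMatrix n).vecMulLinear := by
    obtain ⟨hJ, hJne⟩ := mem_powerset_erase_empty.mp J.2
    have : Pi.single J 1 = ∑ T ∈ (shiftTargets n J).powerset, (-1 : ℤ) ^ #T •
        fun K : (Icc 1 n).powerset.erase ∅ => (schubertRank n (shiftDown J T) K : ℤ) := by
      ext K
      simp only [Finset.sum_apply, Pi.smul_apply, smul_eq_mul,
        sum_shiftDown_schubertRank hJ hJne (mem_powerset_erase_empty.mp K.2).1, Pi.single_apply,
        Subtype.ext_iff]
    rw [this]
    exact sum_mem fun T hT => Submodule.smul_mem _ _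
      (schubertRank_mem_range_vecMulLinear (shiftDown_subset_Icc hJ (mem_powerset.mp hT)))
  choose v hv using hsingle
  exact ⟨Matrix.of v, Matrix.ext fun J K => by
    rw [Matrix.mul_apply_eq_vecMul, Matrix.one_eq_pi_single, ← hv]; rfl⟩

lemma existsUnique_extend_zero {α R : Type*} [Zero R] (s : Finset α) {P : (s → R) → Prop}
    (h : ∃! v, P v) : ∃! c : α → R, (∀ a ∉ s, c a = 0) ∧ P fun a => c a := by
  classical
  obtain ⟨v, hv, huniq⟩ := h
  refine ⟨fun a => if ha : a ∈ s then v ⟨a, ha⟩ else 0, ⟨fun a ha => dif_neg ha, by simpa⟩, ?_⟩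
  rintro c ⟨hc, hcP⟩
  funext a
  by_cases ha : a ∈ s
  · simp [ha, ← huniq _ hcP]
  · simp [ha, hc a ha]

theorem stmt_6_general (n : ℕ) (f : Finset ℕ → ℤ) (hf : f ∅ = 0) :
    ∃! c : Finset ℕ → ℤ,
      (∀ I : Finset ℕ, I ∉ ((Finset.Icc 1 n).powerset.erase ∅) → c I = 0) ∧
      ∀ J ⊆ Finset.Icc 1 n,
        f J = ∑ I ∈ (Finset.Icc 1 n).powerset.erase ∅,
          c I * (schubertRank n I J : ℤ) := by
  have hM := isUnit_schubertMatrix n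
  have hequations (c : Finset ℕ → ℤ) :
      (∀ J ⊆ Icc 1 n, f J = ∑ I ∈ (Icc 1 n).powerset.erase ∅, c I * (schubertRank n I J : ℤ)) ↔
        Matrix.vecMul (fun I : (Icc 1 n).powerset.erase ∅ => c I) (schubertMatrix n) =
          fun J : (Icc 1 n).powerset.erase ∅ => f J := by
    constructor
    · intro h
      funext J
      rw [h J (mem_powerset_erase_empty.mp J.2).1, ← sum_coe_sort]
      rfl
    · intro h J hJ
      rcases J.eq_empty_or_nonempty with rfl | hJne
      · simp [hf, schubertRank_empty_right]
      · rw [← sum_coe_sort]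
        exact (congr_fun h ⟨J, mem_powerset_erase_empty.mpr ⟨hJ, hJne⟩⟩).symm
  simp_rw [hequations]
  exact existsUnique_extend_zero _ (Function.Bijective.existsUnique
    ⟨Matrix.vecMul_injective_of_isUnit hM, Matrix.vecMul_surjective_iff_isUnit.mpr hM⟩ _)

theorem stmt_6 (n : ℕ) (hn : 1 ≤ n) (f : Finset ℕ → ℤ) (hf : f ∅ = 0) :
    ∃! c : Finset ℕ → ℤ,
      (∀ I : Finset ℕ, I ∉ ((Finset.Icc 1 n).powerset.erase ∅) → c I = 0) ∧
      ∀ J ⊆ Finset.Icc 1 n,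
        f J = ∑ I ∈ (Finset.Icc 1 n).powerset.erase ∅,
          c I * (schubertRank n I J : ℤ) :=
  stmt_6_general n f hf
end

section
/- Let S ⊆ [n] be nonempty, s ∈ S, and d = s − #{i ∈ S : i ≤ s}. Then for every 0 ≤ k ≤ d and every I ⊆ [n], r_{SM_n(S^{(k,s)})}(I) = min{ r_{SM_n(S^{(d,s)})}(I), r_{SM_n(S)}(I) + k }. Furthermore, for all J' ⊆ J ⊆ [n], r_{SM_n(S^{(d,s)})}(J) − r_{SM_n(S^{(d,s)})}(J') ≥ r_{SM_n(S)}(J) − r_{SM_n(S)}(J'). -/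
open MvPolynomial

/-!
The rank of `J` in the Schubert matroid of `I ⊆ [1, n]` is
`min_t (#{j ∈ J | j ≤ t} + #{i ∈ I | t < i})`. The bases are the `B ⊆ [1, n]` with
`#B = #I` and `#{b ∈ B | t < b} ≤ #{i ∈ I | t < i}` for all `t`, which gives the upper bound;
matching `J` greedily against `I` from the top, then filling up with the smallest free elements,
attains it.

`S^{(k,s)}` is `S` together with the `k` largest elements of `M = [1, s) \ S`, so in the rank
formula `#{i ∈ S | t < i}` becomes `#{i ∈ S | t < i} + min k m_t`, where
`m_t = #{i ∈ M | t < i} ≤ #M = d`.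
The first claim is then `min_t (a_t + min k m_t) = min (min_t (a_t + m_t)) (min_t a_t + k)`;
the second holds because `m_t` decreases in `t` while `#{j ∈ J | j ≤ t} - #{j ∈ J' | j ≤ t}`
increases.
-/

section

open Finset

def lowCount (A : Finset ℕ) (t : ℕ) : ℕ := #{a ∈ A | a ≤ t}

def highCount (A : Finset ℕ) (t : ℕ) : ℕ := #{a ∈ A | t < a}

section Counting

variable {A B : Finset ℕ} {t u : ℕ}

lemma lowCount_add_highCount (A : Finset ℕ) (t : ℕ) : lowCount A t + highCount A t = #A := by
  simpa [lowCount, highCount] using card_filter_add_card_filter_not (s := A) (p := (· ≤ t))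

lemma lowCount_mono (h : A ⊆ B) (t : ℕ) : lowCount A t ≤ lowCount B t :=
  card_le_card (filter_subset_filter _ h)

lemma highCount_mono (h : A ⊆ B) (t : ℕ) : highCount A t ≤ highCount B t :=
  card_le_card (filter_subset_filter _ h)

lemma lowCount_monotone (A : Finset ℕ) : Monotone (lowCount A) := fun _ _ h =>
  card_le_card fun _ hx => mem_filter.2 ⟨(mem_filter.1 hx).1, (mem_filter.1 hx).2.trans h⟩

lemma highCount_antitone (A : Finset ℕ) : Antitone (highCount A) := fun _ _ h =>
  card_le_card fun _ hx => mem_filter.2 ⟨(mem_filter.1 hx).1, h.trans_lt (mem_filter.1 hx).2⟩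

lemma lowCount_insert {a : ℕ} (ha : a ∉ A) (t : ℕ) :
    lowCount (insert a A) t = lowCount A t + if a ≤ t then 1 else 0 := by
  unfold lowCount
  split_ifs with h
  · rw [filter_insert, if_pos h, card_insert_of_notMem (by simp [ha])]
  · rw [filter_insert, if_neg h, add_zero]

lemma highCount_insert {a : ℕ} (ha : a ∉ A) (t : ℕ) :
    highCount (insert a A) t = highCount A t + if t < a then 1 else 0 := by
  unfold highCount
  split_ifs with h
  · rw [filter_insert, if_pos h, card_insert_of_notMem (by simp [ha])]
  · rw [filter_insert, if_neg h, add_zero]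

lemma highCount_union_of_disjoint (h : Disjoint A B) (t : ℕ) :
    highCount (A ∪ B) t = highCount A t + highCount B t := by
  rw [highCount, filter_union, card_union_of_disjoint (disjoint_filter_filter h)]; rfl

lemma highCount_zero (hA : 0 ∉ A) : highCount A 0 = #A := by
  rw [highCount, filter_true_of_mem fun a ha => Nat.pos_of_ne_zero (ne_of_mem_of_not_mem ha hA)]

lemma zero_notMem_of_subset_Icc {n : ℕ} (hA : A ⊆ Icc 1 n) : 0 ∉ A := fun h => by
  simpa using hA h

lemma lowCount_le_of_subset_Icc {n : ℕ} (hA : A ⊆ Icc 1 n) (t : ℕ) : lowCount A t ≤ t := by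
  unfold lowCount
  simpa using card_le_card fun a (ha : a ∈ {a ∈ A | a ≤ t}) =>
    mem_Icc.2 ⟨(mem_Icc.1 (hA (mem_filter.1 ha).1)).1, (mem_filter.1 ha).2⟩

lemma card_inter_le_lowCount_add_highCount (J B : Finset ℕ) (t : ℕ) :
    #(J ∩ B) ≤ lowCount J t + highCount B t := by
  have := lowCount_add_highCount (J ∩ B) t
  have := lowCount_mono inter_subset_left t (A := J ∩ B)
  have := highCount_mono inter_subset_right t (A := J ∩ B)
  omega

lemma lowCount_add_lowCount_le_of_subset (h : A ⊆ B) (hut : u ≤ t) :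
    lowCount B u + lowCount A t ≤ lowCount B t + lowCount A u := by
  have split (X : Finset ℕ) : lowCount X t = lowCount X u + #{x ∈ X | u < x ∧ x ≤ t} := by
    have hsplit : {x ∈ X | x ≤ t} = {x ∈ X | x ≤ u} ∪ {x ∈ X | u < x ∧ x ≤ t} := by
      rw [← filter_or]; exact filter_congr fun x _ => by omega
    rw [lowCount, lowCount, hsplit,
      card_union_of_disjoint (disjoint_filter.2 fun x _ h1 h2 => by omega)]
  have := card_le_card (filter_subset_filter (fun x => u < x ∧ x ≤ t) h)
  rw [split A, split B]; omega

end Counting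

lemma getD_sort_le_iff (A : Finset ℕ) {m : ℕ} (hm : m < #A) (t : ℕ) :
    (A.sort (· ≤ ·)).getD m 0 ≤ t ↔ m < lowCount A t := by
  set f := A.orderEmbOfFin rfl
  have hget : (A.sort (· ≤ ·)).getD m 0 = f ⟨m, hm⟩ := by
    rw [List.getD_eq_getElem _ _ (by rwa [length_sort])]; rfl
  have hlow : lowCount A t = #{i | f i ≤ t} := by
    conv_lhs => rw [lowCount, ← image_orderEmbOfFin_univ A rfl]
    rw [filter_image, card_image_of_injective _ f.injective]
  rw [hget, hlow]
  constructor
  · intro h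
    have := card_le_card fun i (hi : i ∈ Iic (⟨m, hm⟩ : Fin #A)) =>
      mem_filter.2 ⟨mem_univ i, (f.monotone (mem_Iic.1 hi)).trans h⟩
    rw [Fin.card_Iic] at this
    exact this
  · intro h
    by_contra! hlt
    have := card_le_card fun i (hi : i ∈ ({i | f i ≤ t} : Finset (Fin #A))) =>
      mem_Iio.2 (f.lt_iff_lt.1 ((mem_filter.1 hi).2.trans_lt hlt))
    rw [Fin.card_Iio] at this
    exact absurd h (not_lt.2 this)

lemma galeLE_iff (B I : Finset ℕ) :
    galeLE B I ↔ #B = #I ∧ ∀ t, highCount B t ≤ highCount I t := by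
  suffices galeLE B I ↔ #B = #I ∧ ∀ t, lowCount I t ≤ lowCount B t by
    refine this.trans (and_congr_right fun hcard => forall_congr' fun t => ?_)
    have := lowCount_add_highCount B t
    have := lowCount_add_highCount I t
    omega
  refine and_congr_right fun hcard => ⟨fun h t => ?_, fun h m hm => ?_⟩
  · by_contra! hlt
    have hI : lowCount I t - 1 < #I := by
      have := lowCount_add_highCount I t; omega
    have hI' := (getD_sort_le_iff I hI t).2 (by omega)
    have := (getD_sort_le_iff B (by omega) t).1 ((h _ (by omega)).trans hI')
    omega
  · have hI := (getD_sort_le_iff I (hcard ▸ hm) _).1 le_rfl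
    exact (getD_sort_le_iff B hm _).2 (hI.trans_le (h _))

/-- Greedy matching from the top: the largest element `a` of `I` is matched with the largest
element of `J` not exceeding `a`, if there is one. -/
lemma exists_subset_highCount_le_and_lowCount_add_highCount_le (I J : Finset ℕ) (hJ : 0 ∉ J) :
    ∃ V ⊆ J, (∀ t, highCount V t ≤ highCount I t) ∧
      ∃ t, lowCount J t + highCount I t ≤ #V := by
  induction I using Finset.induction_on_max generalizing J with
  | empty =>
    have hJ0 : lowCount J 0 = 0 :=
      card_eq_zero.2 (filter_false_of_mem fun j hj h0 => hJ (Nat.le_zero.1 h0 ▸ hj))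
    exact ⟨∅, empty_subset _, fun t => by simp [highCount], 0, by simp [hJ0, highCount]⟩
  | insert a I hlt ih =>
    have haI : a ∉ I := fun h => lt_irrefl a (hlt a h)
    have hIa : highCount I a = 0 :=
      card_eq_zero.2 <| filter_false_of_mem fun x hx => (hlt x hx).not_gt
    have hinsI (t : ℕ) := highCount_insert haI t
    by_cases hJa : {j ∈ J | j ≤ a}.Nonempty
    · set j := {j ∈ J | j ≤ a}.max' hJa
      obtain ⟨hjJ, hja⟩ := mem_filter.1 (max'_mem _ hJa)
      obtain ⟨V, hVJ, hVI, t, ht⟩ := ih (J.erase j) fun h => hJ (mem_of_mem_erase h)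
      have hjV : j ∉ V := fun h => notMem_erase j J (hVJ h)
      have hinsJ (t : ℕ) := insert_erase hjJ ▸ lowCount_insert (notMem_erase j J) t
      refine ⟨insert j V, insert_subset hjJ (hVJ.trans (erase_subset _ _)), fun t => ?_, ?_⟩
      · rw [highCount_insert hjV, hinsI]
        have := hVI t
        split_ifs <;> omega
      · rw [card_insert_of_notMem hjV]
        by_cases hat : a ≤ t
        · exact ⟨t, by rw [hinsJ, hinsI, if_pos (hja.trans hat), if_neg hat.not_gt]; omega⟩
        by_cases hjt : j ≤ t
        · have hJaj : lowCount J a = lowCount J j := le_antisymm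
            (card_le_card fun x hx => mem_filter.2 ⟨(mem_filter.1 hx).1, le_max' _ x hx⟩)
            (lowCount_monotone J hja)
          refine ⟨a, ?_⟩
          rw [hinsI, hIa, hJaj, hinsJ, if_pos le_rfl, if_neg (lt_irrefl a)]
          have := lowCount_monotone (J.erase j) hjt
          omega
        · exact ⟨t, by rw [hinsJ, hinsI, if_neg hjt, if_pos (by omega)]; omega⟩
    · obtain ⟨V, hVJ, hVI, -⟩ := ih J hJ
      refine ⟨V, hVJ, fun t => (hVI t).trans (by rw [hinsI]; omega), a, ?_⟩
      rw [hinsI, hIa, if_neg (lt_irrefl a), lowCount, not_nonempty_iff_eq_empty.1 hJa]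
      simp

variable {n : ℕ} {I V : Finset ℕ}

/-- Adding the least element of `[1, n]` missing from `V` keeps `V` below `I`: all positions
`t` it affects have `[1, t] ⊆ V`. -/
lemma exists_insert_highCount_le (hI : I ⊆ Icc 1 n) (hV : V ⊆ Icc 1 n)
    (hVI : ∀ t, highCount V t ≤ highCount I t) (hlt : #V < #I) :
    ∃ x ∈ Icc 1 n \ V, ∀ t, highCount (insert x V) t ≤ highCount I t := by
  have hne : (Icc 1 n \ V).Nonempty := by
    rw [← card_pos, card_sdiff_of_subset hV]
    have := card_le_card hI
    simp only [Nat.card_Icc] at this ⊢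
    omega
  set x := (Icc 1 n \ V).min' hne
  have hx := min'_mem _ hne
  refine ⟨x, hx, fun t => ?_⟩
  rw [highCount_insert (mem_sdiff.1 hx).2]
  split_ifs with htx
  · have hVt : t ≤ lowCount V t := by
      have : Icc 1 t ⊆ {v ∈ V | v ≤ t} := fun y hy => by
        obtain ⟨hy1, hyt⟩ := mem_Icc.1 hy
        refine mem_filter.2 ⟨by_contra fun hyV => ?_, hyt⟩
        have := min'_le (Icc 1 n \ V) y (mem_sdiff.2 ⟨mem_Icc.2 ⟨hy1, by
          have := (mem_Icc.1 (mem_sdiff.1 hx).1).2; omega⟩, hyV⟩)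
        omega
      simpa [lowCount] using card_le_card this
    have := lowCount_le_of_subset_Icc hI t
    have := lowCount_add_highCount V t
    have := lowCount_add_highCount I t
    omega
  · simpa using hVI t

lemma exists_superset_card_eq_highCount_le (hI : I ⊆ Icc 1 n) (hV : V ⊆ Icc 1 n)
    (hVI : ∀ t, highCount V t ≤ highCount I t) :
    ∃ B, V ⊆ B ∧ B ⊆ Icc 1 n ∧ #B = #I ∧ ∀ t, highCount B t ≤ highCount I t := by
  induction h : #I - #V generalizing V with
  | zero =>
    have hle : #V ≤ #I := by
      simpa [highCount_zero (zero_notMem_of_subset_Icc hV),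
        highCount_zero (zero_notMem_of_subset_Icc hI)] using hVI 0
    exact ⟨V, subset_rfl, hV, by omega, hVI⟩
  | succ k ih =>
    obtain ⟨x, hx, hxI⟩ := exists_insert_highCount_le hI hV hVI (by omega)
    obtain ⟨hxn, hxV⟩ := mem_sdiff.1 hx
    obtain ⟨B, hVB, hB⟩ :=
      ih (insert_subset hxn hV) hxI (by rw [card_insert_of_notMem hxV]; omega)
    exact ⟨B, (subset_insert x V).trans hVB, hB⟩

theorem isLeast_schubertRank {J : Finset ℕ} (hI : I ⊆ Icc 1 n) (hJ : J ⊆ Icc 1 n) :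
    IsLeast (Set.range fun t => lowCount J t + highCount I t) (schubertRank n I J) := by
  classical
  have hbases {B} :
      B ∈ {B ∈ (Icc 1 n).powerset | galeLE B I} ↔ B ⊆ Icc 1 n ∧ galeLE B I := by
    simp
  have hle : ∀ t, schubertRank n I J ≤ lowCount J t + highCount I t := fun t => by
    unfold schubertRank
    convert Finset.sup_le fun B hB => ?_
    obtain ⟨-, hBI⟩ := (galeLE_iff B I).1 (hbases.1 hB).2
    exact (card_inter_le_lowCount_add_highCount J B t).trans (by have := hBI t; omega)
  obtain ⟨V, hVJ, hVI, t, ht⟩ :=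
    exists_subset_highCount_le_and_lowCount_add_highCount_le I J (zero_notMem_of_subset_Icc hJ)
  obtain ⟨B, hVB, hB, hBI⟩ := exists_superset_card_eq_highCount_le hI (hVJ.trans hJ) hVI
  have hBrank : #(J ∩ B) ≤ schubertRank n I J := by
    unfold schubertRank
    exact le_sup (f := fun B => #(J ∩ B)) (hbases.2 ⟨hB, (galeLE_iff B I).2 hBI⟩)
  have := card_le_card (subset_inter hVJ hVB)
  refine ⟨⟨t, le_antisymm (by dsimp only; omega) (hle t)⟩, ?_⟩
  rintro _ ⟨t, rfl⟩
  exact hle t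

section Minima

variable {ι : Type*}

lemma IsLeast.range_min {α : Type*} [LinearOrder α] {f g : ι → α} {a b : α}
    (hf : IsLeast (Set.range f) a) (hg : IsLeast (Set.range g) b) :
    IsLeast (Set.range fun i => min (f i) (g i)) (min a b) := by
  obtain ⟨⟨i, rfl⟩, hfi⟩ := hf
  obtain ⟨⟨j, rfl⟩, hgj⟩ := hg
  refine ⟨?_, ?_⟩
  · rcases le_total (f i) (g j) with h | h
    · exact ⟨i, by dsimp only; rw [min_eq_left h, min_eq_left (h.trans (hgj ⟨i, rfl⟩))]⟩
    · exact ⟨j, by dsimp only; rw [min_eq_right h, min_eq_right ((hfi ⟨j, rfl⟩).trans' h)]⟩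
  · rintro _ ⟨k, rfl⟩
    exact min_le_min (hfi ⟨k, rfl⟩) (hgj ⟨k, rfl⟩)

lemma IsLeast.range_add_const {f : ι → ℕ} {a : ℕ} (hf : IsLeast (Set.range f) a) (k : ℕ) :
    IsLeast (Set.range fun i => f i + k) (a + k) := by
  rw [show (fun i => f i + k) = (· + k) ∘ f from rfl, Set.range_comp]
  exact (add_left_mono (a := k)).map_isLeast hf

/-- Minimizers `t` of `a + m` and `u` of `b` are compared: for `u ≤ t` use the monotonicity of
`a - b`, for `t ≤ u` that of `m`. -/
lemma IsLeast.add_le_add_of_antitone [LinearOrder ι] {a b m : ι → ℕ} {x y x' y' : ℕ}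
    (ha : IsLeast (Set.range a) x) (hb : IsLeast (Set.range b) y)
    (ham : IsLeast (Set.range fun t => a t + m t) x')
    (hbm : IsLeast (Set.range fun t => b t + m t) y')
    (hab : ∀ u t, u ≤ t → a u + b t ≤ a t + b u) (hm : Antitone m) :
    x + y' ≤ x' + y := by
  obtain ⟨⟨t, rfl⟩, -⟩ := ham
  obtain ⟨⟨u, rfl⟩, -⟩ := hb
  rcases le_total u t with hut | htu
  · have := ha.2 ⟨u, rfl⟩
    have := hbm.2 ⟨t, rfl⟩
    have := hab u t hut
    dsimp only at *
    omega
  · have := ha.2 ⟨t, rfl⟩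
    have := hbm.2 ⟨u, rfl⟩
    have := hm htu
    dsimp only at *
    omega

end Minima

section Padding

variable {S : Finset ℕ} {s k : ℕ}

lemma highCount_eq_min_of_upwardClosed {T M : Finset ℕ} (hTM : T ⊆ M)
    (hT : ∀ x ∈ T, ∀ y ∈ M, x ≤ y → y ∈ T) (t : ℕ) :
    highCount T t = min #T (highCount M t) := by
  have hTt : highCount T t ≤ #T := card_filter_le _ _
  by_cases h : ∃ y ∈ M, t < y ∧ y ∉ T
  · obtain ⟨y, hyM, hty, hyT⟩ := h
    have hall : highCount T t = #T := by
      refine congrArg card (filter_true_of_mem fun x hx => ?_)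
      by_contra! hxt
      exact hyT (hT x hx y hyM (by omega))
    have := highCount_mono hTM t
    omega
  · push Not at h
    have := le_antisymm (highCount_mono hTM t) <| card_le_card fun y hy =>
      mem_filter.2 ⟨h y (mem_filter.1 hy).1 (mem_filter.1 hy).2, (mem_filter.1 hy).2⟩
    omega

lemma exists_pad_eq_union (hk : k ≤ #(Ico 1 s \ S)) :
    ∃ T ⊆ Ico 1 s \ S, #T = k ∧ (∀ x ∈ T, ∀ y ∈ Ico 1 s \ S, x ≤ y → y ∈ T) ∧
      pad S s k = S ∪ T := by
  induction k with
  | zero => exact ⟨∅, empty_subset _, rfl, by simp, by simp [pad]⟩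
  | succ k ih =>
    obtain ⟨T, hTM, hTk, hTup, hpad⟩ := ih (by omega)
    have hfilter : {i ∈ Ico 1 s | i ∉ pad S s k} = (Ico 1 s \ S) \ T := by
      ext i; simp [hpad, and_assoc]
    have hne : ((Ico 1 s \ S) \ T).Nonempty := by
      rw [← card_pos, card_sdiff_of_subset hTM]; omega
    set m := ((Ico 1 s \ S) \ T).max' hne
    obtain ⟨hmM, hmT⟩ := mem_sdiff.1 (max'_mem _ hne)
    refine ⟨insert m T, insert_subset hmM hTM, by rw [card_insert_of_notMem hmT, hTk], ?_, ?_⟩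
    · intro x hx y hy hxy
      by_cases hyT : y ∈ T
      · exact mem_insert_of_mem hyT
      have hym : y ≤ m := le_max' _ y (mem_sdiff.2 ⟨hy, hyT⟩)
      rcases mem_insert.1 hx with rfl | hxT
      · exact le_antisymm hym hxy ▸ mem_insert_self _ _
      · exact absurd (hTup x hxT y hy hxy) hyT
    · rw [pad, dif_pos (hfilter ▸ hne)]
      simp only [hfilter]
      change insert m (pad S s k) = _
      rw [hpad, union_insert]

lemma padDepth_eq_card_sdiff (hS : 0 ∉ S) (hs : s ∈ S) : padDepth S s = #(Ico 1 s \ S) := by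
  have hsplit : {i ∈ S | i ≤ s} = insert s (Ico 1 s ∩ S) := by
    ext i
    simp only [mem_filter, mem_insert, mem_inter, mem_Ico]
    constructor
    · rintro ⟨hi, his⟩
      have : i ≠ 0 := ne_of_mem_of_not_mem hi hS
      rcases his.eq_or_lt with rfl | his
      exacts [Or.inl rfl, Or.inr ⟨⟨by omega, his⟩, hi⟩]
    · rintro (rfl | ⟨⟨-, his⟩, hi⟩)
      exacts [⟨hs, le_rfl⟩, ⟨hi, his.le⟩]
  have := card_sdiff_add_card_inter (Ico 1 s) S
  rw [padDepth, hsplit, card_insert_of_notMem (by simp), Nat.card_Ico] at *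
  omega

theorem isLeast_schubertRank_pad {J : Finset ℕ} (hS : S ⊆ Icc 1 n)
    (hs : s ∈ S) (hk : k ≤ padDepth S s) (hJ : J ⊆ Icc 1 n) :
    IsLeast (Set.range fun t => lowCount J t + highCount S t + min k (highCount (Ico 1 s \ S) t))
      (schubertRank n (pad S s k) J) := by
  rw [padDepth_eq_card_sdiff (zero_notMem_of_subset_Icc hS) hs] at hk
  obtain ⟨T, hTM, hTk, hTup, hpad⟩ := exists_pad_eq_union hk
  have hsn : s ≤ n := (mem_Icc.1 (hS hs)).2
  have hTn : T ⊆ Icc 1 n := fun x hx => by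
    have := mem_Ico.1 (mem_sdiff.1 (hTM hx)).1
    exact mem_Icc.2 ⟨this.1, by omega⟩
  rw [hpad]
  convert isLeast_schubertRank (union_subset hS hTn) hJ using 3 with t
  rw [highCount_union_of_disjoint (disjoint_sdiff.mono_right hTM),
    highCount_eq_min_of_upwardClosed hTM hTup, hTk, add_assoc]

end Padding

end

theorem stmt_10_general (n : ℕ) (S : Finset ℕ) (hS : S ⊆ Finset.Icc 1 n)
    (s : ℕ) (hs : s ∈ S) :
    (∀ k ≤ padDepth S s, ∀ I ⊆ Finset.Icc 1 n,
      schubertRank n (pad S s k) I =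
        min (schubertRank n (pad S s (padDepth S s)) I) (schubertRank n S I + k)) ∧
    ∀ J' J : Finset ℕ, J' ⊆ J → J ⊆ Finset.Icc 1 n →
      (schubertRank n S J : ℤ) - (schubertRank n S J' : ℤ) ≤
        (schubertRank n (pad S s (padDepth S s)) J : ℤ) -
          (schubertRank n (pad S s (padDepth S s)) J' : ℤ) := by
  have hcount_le_depth (t : ℕ) : highCount (Finset.Ico 1 s \ S) t ≤ padDepth S s :=
    (Finset.card_filter_le _ _).trans (padDepth_eq_card_sdiff (zero_notMem_of_subset_Icc hS) hs).ge
  have rank {k} (hk : k ≤ padDepth S s) {J} (hJ : J ⊆ Finset.Icc 1 n) :=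
    isLeast_schubertRank_pad hS hs hk hJ
  refine ⟨fun k hk I hI => (rank hk hI).unique ?_, fun J' J hJ'J hJ => ?_⟩
  · convert (rank le_rfl hI).range_min ((isLeast_schubertRank hS hI).range_add_const k)
      using 2
    funext t
    have := hcount_le_depth t
    omega
  · have hJ' := hJ'J.trans hJ
    have key := (isLeast_schubertRank hS hJ).add_le_add_of_antitone
      (isLeast_schubertRank hS hJ') (m := highCount (Finset.Ico 1 s \ S))
      (by simpa only [min_eq_right (hcount_le_depth _)] using rank le_rfl hJ)
      (by simpa only [min_eq_right (hcount_le_depth _)] using rank le_rfl hJ')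
      (fun u t hut => by have := lowCount_add_lowCount_le_of_subset hJ'J hut; omega)
      (highCount_antitone _)
    omega

theorem stmt_10 (n : ℕ) (S : Finset ℕ) (hS : S ⊆ Finset.Icc 1 n) (hS0 : S.Nonempty)
    (s : ℕ) (hs : s ∈ S) :
    (∀ k ≤ padDepth S s, ∀ I ⊆ Finset.Icc 1 n,
      schubertRank n (pad S s k) I =
        min (schubertRank n (pad S s (padDepth S s)) I) (schubertRank n S I + k)) ∧
    ∀ J' J : Finset ℕ, J' ⊆ J → J ⊆ Finset.Icc 1 n →
      (schubertRank n S J : ℤ) - (schubertRank n S J' : ℤ) ≤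
        (schubertRank n (pad S s (padDepth S s)) J : ℤ) -
          (schubertRank n (pad S s (padDepth S s)) J' : ℤ) :=
  stmt_10_general n S hS s hs
end
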